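/- Let G > 0, γ > 0, Δ > 0, m > 0 and α ∈ ℝ. Then the function r(t) = (2G m)^{1/3} · ((9/4)(t − α)² + γ²Δ)^{1/3} is differentiable and satisfies, for all t ∈ ℝ, the effective LTB equation of motion (dr/dt)² = (2G m / r) · (1 − 2G m γ² Δ / r³). -/

import Mathlib

/-!
Since `r³ = 2Gm · u` with `u(t) = (9/4)(t − α)² + γ²Δ`, differentiating gives `3r²ṙ = 2Gm · u̇`,
and the profile satisfies `u̇² = 9(u − γ²Δ)`. Eliminating `u̇` and `u` yields
`ṙ² = 2Gm (r³ − 2Gmγ²Δ) / r⁴`, which is the effective equation of motion.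
-/

open Real

theorem Real.rpow_one_div_three_pow_three {x : ℝ} (hx : 0 ≤ x) : (x ^ ((1 : ℝ) / 3)) ^ 3 = x := by
  simpa using rpow_inv_natCast_pow hx (n := 3) (by norm_num)

theorem HasDerivAt.three_mul_sq_mul_eq_of_pow_three_eq {r u : ℝ → ℝ} {A r' u' t : ℝ}
    (hcube : ∀ s, r s ^ 3 = A * u s) (hr : HasDerivAt r r' t) (hu : HasDerivAt u u' t) :
    3 * r t ^ 2 * r' = A * u' := by
  have hr3 := hr.fun_pow 3
  rw [funext hcube] at hr3
  simpa using hr3.unique (hu.const_mul A)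

theorem sq_eq_div_mul_one_sub_of_pow_three_eq {A c R R' U U' : ℝ} (hR : R ≠ 0)
    (hchain : 3 * R ^ 2 * R' = A * U') (hcube : R ^ 3 = A * U) (hU' : U' ^ 2 = 9 * (U - c)) :
    R' ^ 2 = A / R * (1 - A * c / R ^ 3) := by
  field_simp
  linear_combination (3 * R ^ 2 * R' + A * U') * hchain / 9 - A * hcube + A ^ 2 * hU' / 9

theorem hasDerivAt_bounce_profile (α c t : ℝ) :
    HasDerivAt (fun s => 9 / 4 * (s - α) ^ 2 + c) (9 / 2 * (t - α)) t := by
  have hsub : HasDerivAt (fun s => s - α) 1 t := (hasDerivAt_id' t).sub_const α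
  exact (((hsub.fun_pow 2).const_mul (9 / 4 : ℝ)).add_const c).congr_deriv (by ring)

theorem effective_ltb_solution
    (G γ Δ m α : ℝ) (hG : 0 < G) (hγ : 0 < γ) (hΔ : 0 < Δ) (hm : 0 < m)
    (r : ℝ → ℝ)
    (hr : ∀ t, r t =
      (2 * G * m) ^ ((1:ℝ)/3) * ((9/4) * (t - α) ^ 2 + γ ^ 2 * Δ) ^ ((1:ℝ)/3)) :
    ∀ t : ℝ, DifferentiableAt ℝ r t ∧
      (deriv r t) ^ 2 =
        (2 * G * m / r t) * (1 - 2 * G * m * γ ^ 2 * Δ / (r t) ^ 3) := by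
  intro t
  set u : ℝ → ℝ := fun s => 9 / 4 * (s - α) ^ 2 + γ ^ 2 * Δ
  have hA : 0 < 2 * G * m := by positivity
  have hu : ∀ s, 0 < u s := fun s => by positivity
  have hcube : ∀ s, r s ^ 3 = 2 * G * m * u s := fun s => by
    rw [hr, mul_pow, rpow_one_div_three_pow_three hA.le, rpow_one_div_three_pow_three (hu s).le]
  have hdiff : DifferentiableAt ℝ r t := by
    rw [funext hr]
    exact ((hasDerivAt_bounce_profile α (γ ^ 2 * Δ) t).differentiableAt.rpow_const
      (Or.inl (hu t).ne')).const_mul _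
  have hrpos : 0 < r t := by rw [hr]; positivity
  refine ⟨hdiff, ?_⟩
  rw [sq_eq_div_mul_one_sub_of_pow_three_eq (c := γ ^ 2 * Δ) hrpos.ne'
    (hdiff.hasDerivAt.three_mul_sq_mul_eq_of_pow_three_eq hcube
      (hasDerivAt_bounce_profile α (γ ^ 2 * Δ) t))
    (hcube t) (by simp only [u]; ring)]
  ring
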